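/- Let f : X → X' be a nonexpanding map between compact fuzzy metric spaces (X, M, *) and (X', M', *) with the Łukasiewicz t-norm. Then the pushforward map P(f) : P(X) → P(X'), defined by P(f)(μ)(A) = μ(f⁻¹(A)), is nonexpanding with respect to the fuzzy Prokhorov metrics M̂ and M̂'. -/

import Mathlib

open Set MeasureTheory Filter Topology

noncomputable section

/-- The Łukasiewicz t-norm. -/
def luk (a b : ℝ) : ℝ := max (a + b - 1) 0

/-- A continuous t-norm on `[0,1]`. -/
structure IsContinuousTNorm (star : ℝ → ℝ → ℝ) : Prop where
  maps_to : ∀ a b, a ∈ Icc (0:ℝ) 1 → b ∈ Icc (0:ℝ) 1 → star a b ∈ Icc (0:ℝ) 1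
  comm : ∀ a b, a ∈ Icc (0:ℝ) 1 → b ∈ Icc (0:ℝ) 1 → star a b = star b a
  assoc : ∀ a b c, a ∈ Icc (0:ℝ) 1 → b ∈ Icc (0:ℝ) 1 → c ∈ Icc (0:ℝ) 1 →
    star (star a b) c = star a (star b c)
  continuous : ContinuousOn (fun p : ℝ × ℝ => star p.1 p.2) (Icc 0 1 ×ˢ Icc 0 1)
  one_right : ∀ a, a ∈ Icc (0:ℝ) 1 → star a 1 = a
  mono : ∀ a b c d, a ∈ Icc (0:ℝ) 1 → b ∈ Icc (0:ℝ) 1 → c ∈ Icc (0:ℝ) 1 →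
    d ∈ Icc (0:ℝ) 1 → a ≤ c → b ≤ d → star a b ≤ star c d

/-- A fuzzy metric (George–Veeramani) with respect to a t-norm `star`. -/
structure IsFuzzyMetric {X : Type*} (M : X → X → ℝ → ℝ) (star : ℝ → ℝ → ℝ) : Prop where
  pos : ∀ x y t, 0 < t → 0 < M x y t
  le_one : ∀ x y t, 0 < t → M x y t ≤ 1
  eq_one_iff : ∀ x y t, 0 < t → (M x y t = 1 ↔ x = y)
  symm : ∀ x y t, 0 < t → M x y t = M y x t
  triangle : ∀ x y z t s, 0 < t → 0 < s → star (M x y t) (M y z s) ≤ M x z (t + s)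
  continuousOn : ∀ x y, ContinuousOn (fun t => M x y t) (Ioi (0:ℝ))

/-- The open ball `B(x,r,t)` in a fuzzy metric space. -/
def fmBall {X : Type*} (M : X → X → ℝ → ℝ) (x : X) (r t : ℝ) : Set X :=
  {y | 1 - r < M x y t}

/-- The `r,t`-expansion `A^{r,t}` of a set `A`. -/
def fmExpand {X : Type*} (M : X → X → ℝ → ℝ) (A : Set X) (r t : ℝ) : Set X :=
  ⋃ x ∈ A, fmBall M x r t

/-- The fuzzy metric `M` generates the given topology on `X`. -/
def GeneratesTopology {X : Type*} [TopologicalSpace X] (M : X → X → ℝ → ℝ) : Prop :=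
  TopologicalSpace.IsTopologicalBasis
    {s : Set X | ∃ x r t, 0 < r ∧ r < 1 ∧ 0 < t ∧ s = fmBall M x r t}

/-- The set of admissible radii in the definition of the fuzzy Prokhorov metric. -/
def prokSet {X : Type*} [MeasurableSpace X] (M : X → X → ℝ → ℝ)
    (μ ν : Measure X) (t : ℝ) : Set ℝ :=
  {r | 0 < r ∧ r < 1 ∧ ∀ A : Set X, MeasurableSet A →
    μ A ≤ ν (fmExpand M A r t) + ENNReal.ofReal r ∧
    ν A ≤ μ (fmExpand M A r t) + ENNReal.ofReal r}

/-- The fuzzy Prokhorov function `M̂` on measures. -/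
def fuzzyProkhorov {X : Type*} [MeasurableSpace X] (M : X → X → ℝ → ℝ)
    (μ ν : Measure X) (t : ℝ) : ℝ :=
  1 - sInf (prokSet M μ ν t)

/-! A nonexpanding map pulls expansions back into expansions,
`(f⁻¹ A)^{r,t} ⊆ f⁻¹ (A^{r,t})`, so every radius admissible for `μ, ν` is admissible for their
pushforwards and the infimum defining `M̂'` can only be smaller. That infimum is over a nonempty
set because, on a compact space, the lower semicontinuous function `(x, y) ↦ M x y t` is bounded
below by a positive constant; this makes radii close to `1` admissible. -/

namespace IsFuzzyMetric

variable {X : Type*} {M : X → X → ℝ → ℝ}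

theorem add_sub_one_le (hM : IsFuzzyMetric M luk) (x y z : X) {s t : ℝ} (hs : 0 < s)
    (ht : 0 < t) : M x y s + M y z t - 1 ≤ M x z (s + t) :=
  (le_max_left _ _).trans (hM.triangle x y z s t hs ht)

theorem mem_fmBall_self (hM : IsFuzzyMetric M luk) (x : X) {r t : ℝ} (hr : 0 < r)
    (ht : 0 < t) : x ∈ fmBall M x r t := by
  simp only [fmBall, mem_ofPred_eq, (hM.eq_one_iff x x t ht).mpr rfl]
  linarith

variable [TopologicalSpace X]

theorem lowerSemicontinuous_uncurry (hM : IsFuzzyMetric M luk) (hgen : GeneratesTopology M)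
    {t : ℝ} (ht : 0 < t) : LowerSemicontinuous fun p : X × X => M p.1 p.2 t := by
  rintro ⟨x₀, y₀⟩ c hc
  -- By continuity in `t`, shrinking `t` to `t₁` frees the time `t - t₁` needed to move both points.
  obtain ⟨t₁, ⟨hct₁, ht₁⟩, ht₁t⟩ : ∃ t₁, (c < M x₀ y₀ t₁ ∧ 0 < t₁) ∧ t₁ < t :=
    ((((hM.continuousOn x₀ y₀).continuousAt (Ioi_mem_nhds ht)).eventually
      (eventually_gt_nhds hc)).and (eventually_gt_nhds ht) |>.filter_mono
        (nhdsWithin_le_nhds (s := Iio t))).and eventually_mem_nhdsWithin |>.exists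
  set δ := min ((M x₀ y₀ t₁ - c) / 2) (1 / 2)
  set s := (t - t₁) / 2
  have hδ : 0 < δ := lt_min (by linarith) one_half_pos
  have hs : 0 < s := half_pos (sub_pos.mpr ht₁t)
  have hball (z : X) : fmBall M z δ s ∈ 𝓝 z :=
    (hgen.isOpen ⟨z, δ, s, hδ, (min_le_right _ _).trans_lt one_half_lt_one, hs, rfl⟩).mem_nhds
      (hM.mem_fmBall_self z hδ hs)
  filter_upwards [prod_mem_nhds (hball x₀) (hball y₀)] with ⟨x, y⟩ ⟨hx, hy⟩
  have hx' : 1 - δ < M x x₀ s := by rw [hM.symm x x₀ s hs]; exact hx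
  have hxy₀ := hM.add_sub_one_le x x₀ y₀ hs ht₁
  have hxy := hM.add_sub_one_le x y₀ y (add_pos hs ht₁) hs
  have hst : s + t₁ + s = t := by ring
  rw [hst] at hxy
  have : δ ≤ (M x₀ y₀ t₁ - c) / 2 := min_le_left _ _
  change 1 - δ < M y₀ y s at hy
  show c < M x y t
  linarith

theorem exists_pos_forall_le [CompactSpace X] [Nonempty X] (hM : IsFuzzyMetric M luk)
    (hgen : GeneratesTopology M) {t : ℝ} (ht : 0 < t) :
    ∃ c > 0, ∀ x y : X, c ≤ M x y t := by
  obtain ⟨⟨a, b⟩, -, hmin⟩ := (hM.lowerSemicontinuous_uncurry hgen ht).lowerSemicontinuousOn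
    univ |>.exists_isMinOn univ_nonempty isCompact_univ
  exact ⟨M a b t, hM.pos a b t ht, fun x y => hmin (mem_univ (x, y))⟩

end IsFuzzyMetric

section Expansion

variable {X : Type*} {M : X → X → ℝ → ℝ}

theorem fmExpand_eq_univ {A : Set X} (hA : A.Nonempty) {r t : ℝ}
    (hM : ∀ x y, 1 - r < M x y t) : fmExpand M A r t = univ :=
  eq_univ_of_forall fun y => mem_iUnion₂.mpr ⟨hA.some, hA.some_mem, hM _ y⟩

theorem fmExpand_preimage_subset {X' : Type*} {M' : X' → X' → ℝ → ℝ} {f : X → X'} {t : ℝ}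
    (hf : ∀ x y, M x y t ≤ M' (f x) (f y) t) (A : Set X') (r : ℝ) :
    fmExpand M (f ⁻¹' A) r t ⊆ f ⁻¹' fmExpand M' A r t := by
  simp only [fmExpand, preimage_iUnion₂, subset_def, mem_iUnion₂]
  exact fun y ⟨x, hxA, hxy⟩ => ⟨f x, hxA, (show 1 - r < M x y t from hxy).trans_le (hf x y)⟩

end Expansion

section Prokhorov

variable {X : Type*} [MeasurableSpace X] {M : X → X → ℝ → ℝ}

theorem mem_prokSet_of_forall_lt (μ ν : Measure X) [IsProbabilityMeasure μ]
    [IsProbabilityMeasure ν] {r t : ℝ} (hr₀ : 0 < r) (hr₁ : r < 1)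
    (hM : ∀ x y, 1 - r < M x y t) : r ∈ prokSet M μ ν t := by
  have key (ρ σ : Measure X) [IsProbabilityMeasure ρ] [IsProbabilityMeasure σ] (A : Set X) :
      ρ A ≤ σ (fmExpand M A r t) + ENNReal.ofReal r := by
    rcases A.eq_empty_or_nonempty with rfl | hA
    · simp
    · rw [fmExpand_eq_univ hA hM, measure_univ]
      exact prob_le_one.trans le_self_add
  exact ⟨hr₀, hr₁, fun A _ => ⟨key μ ν A, key ν μ A⟩⟩

theorem prokSet_nonempty [TopologicalSpace X] [CompactSpace X] (hM : IsFuzzyMetric M luk)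
    (hgen : GeneratesTopology M) (μ ν : Measure X) [IsProbabilityMeasure μ]
    [IsProbabilityMeasure ν] {t : ℝ} (ht : 0 < t) : (prokSet M μ ν t).Nonempty := by
  have hX := nonempty_of_isProbabilityMeasure μ
  obtain ⟨c, hc, hcM⟩ := hM.exists_pos_forall_le hgen ht
  have hc₁ : c ≤ 1 := (hcM hX.some hX.some).trans (hM.le_one _ _ t ht)
  exact ⟨1 - c / 2, mem_prokSet_of_forall_lt μ ν (by linarith) (by linarith)
    fun x y => by linarith [hcM x y]⟩

theorem prokSet_subset_prokSet_map {X' : Type*} [MeasurableSpace X'] {M' : X' → X' → ℝ → ℝ}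
    {f : X → X'} (hf : Measurable f) {t : ℝ} (hne : ∀ x y, M x y t ≤ M' (f x) (f y) t)
    (μ ν : Measure X) : prokSet M μ ν t ⊆ prokSet M' (μ.map f) (ν.map f) t := by
  have push (ρ σ : Measure X) {A : Set X'} (hA : MeasurableSet A) {r : ℝ}
      (h : ρ (f ⁻¹' A) ≤ σ (fmExpand M (f ⁻¹' A) r t) + ENNReal.ofReal r) :
      ρ.map f A ≤ σ.map f (fmExpand M' A r t) + ENNReal.ofReal r := by
    rw [Measure.map_apply hf hA]
    grw [h, fmExpand_preimage_subset hne A r, Measure.le_map_apply hf.aemeasurable]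
  rintro r ⟨hr₀, hr₁, hr⟩
  exact ⟨hr₀, hr₁, fun A hA => ⟨push μ ν hA (hr _ (hf hA)).1, push ν μ hA (hr _ (hf hA)).2⟩⟩

end Prokhorov

theorem fuzzyProkhorov_map_nonexpanding_general {X X' : Type*}
    [TopologicalSpace X] [CompactSpace X] [MeasurableSpace X]
    [MeasurableSpace X']
    (M : X → X → ℝ → ℝ) (M' : X' → X' → ℝ → ℝ)
    (hM : IsFuzzyMetric M luk)
    (hgen : GeneratesTopology M)
    (f : X → X') (hf : Measurable f)
    (hne : ∀ x y : X, ∀ t : ℝ, 0 < t → M x y t ≤ M' (f x) (f y) t)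
    (μ ν : ProbabilityMeasure X) (t : ℝ) (ht : 0 < t) :
    fuzzyProkhorov M (μ : Measure X) (ν : Measure X) t ≤
      fuzzyProkhorov M' (Measure.map f (μ : Measure X))
        (Measure.map f (ν : Measure X)) t :=
  sub_le_sub_left (csInf_le_csInf ⟨0, fun _ hr => hr.1.le⟩ (prokSet_nonempty hM hgen _ _ ht)
    (prokSet_subset_prokSet_map hf (fun x y => hne x y t ht) _ _)) 1

/-- the pushforward of measures along a nonexpanding map is nonexpanding
with respect to the fuzzy Prokhorov metrics. -/
theorem fuzzyProkhorov_map_nonexpanding {X X' : Type*}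
    [TopologicalSpace X] [CompactSpace X] [MeasurableSpace X] [BorelSpace X]
    [TopologicalSpace X'] [CompactSpace X'] [MeasurableSpace X'] [BorelSpace X']
    (M : X → X → ℝ → ℝ) (M' : X' → X' → ℝ → ℝ)
    (hM : IsFuzzyMetric M luk) (hM' : IsFuzzyMetric M' luk)
    (hgen : GeneratesTopology M) (hgen' : GeneratesTopology M')
    (f : X → X') (hf : Measurable f)
    (hne : ∀ x y : X, ∀ t : ℝ, 0 < t → M x y t ≤ M' (f x) (f y) t)
    (μ ν : ProbabilityMeasure X) (t : ℝ) (ht : 0 < t) :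
    fuzzyProkhorov M (μ : Measure X) (ν : Measure X) t ≤
      fuzzyProkhorov M' (Measure.map f (μ : Measure X))
        (Measure.map f (ν : Measure X)) t :=
  fuzzyProkhorov_map_nonexpanding_general M M' hM hgen f hf hne μ ν t ht
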